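/- arXiv:1303.3397 — 2 statements merged into one kernel-verified Lean document; each statement's English description precedes it below -/
import Mathlib

section
/- For a triangulation T of the annulus C_{p,q} (p,q ≥ 1), the number of Prüfer arcs in D_z^{+∞} · T equals the number of bridging arcs in T; equivalently, the set of endpoints of bridging arcs of T, counted over both boundaries, has the same cardinality as the set of bridging arcs of T. -/
/-- Asymptotic arcs of the annulus `C_{p,q}`: peripheral arcs on each boundary
(marked points `ZMod p` on the lower boundary `∂`, `ZMod q` on the upper
boundary `∂'`), bridging arcs (two endpoints and a winding number), and the
strictly asymptotic Prüfer/adic arcs based at a marked point of one boundary. -/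
inductive AnnArc (p q : ℕ) : Type
  | lowerPeri (i j : ZMod p) : AnnArc p q
  | upperPeri (i j : ZMod q) : AnnArc p q
  | bridging (i : ZMod p) (j : ZMod q) (w : ℤ) : AnnArc p q
  | lowerPrufer (m : ZMod p) : AnnArc p q
  | lowerAdic (m : ZMod p) : AnnArc p q
  | upperPrufer (m : ZMod q) : AnnArc p q
  | upperAdic (m : ZMod q) : AnnArc p q
  deriving DecidableEq

namespace AnnArc

variable {p q : ℕ}

/-- `m` lies strictly (cyclically) between `i` and `j`. -/
def Between {r : ℕ} (i j m : ZMod r) : Prop :=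
  0 < (m - i).val ∧ (m - i).val < (j - i).val

/-- The cyclic open interval of marked points covered by a peripheral arc. -/
def Cov {r : ℕ} (i j : ZMod r) : Set (ZMod r) := {m | Between i j m}

/-- Two peripheral arcs on the same boundary are compatible iff their covered
intervals are nested or disjoint. -/
def periCompat {r : ℕ} (i j k l : ZMod r) : Prop :=
  Cov i j ⊆ Cov k l ∨ Cov k l ⊆ Cov i j ∨ Disjoint (Cov i j) (Cov k l)

/-- Non-crossing of two bridging arcs, checked on all lifts in the universal cover. -/
def bridgeCompat (p q : ℕ) (i : ZMod p) (j : ZMod q) (w : ℤ)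
    (i' : ZMod p) (j' : ZMod q) (w' : ℤ) : Prop :=
  ∀ k : ℤ, 0 ≤ ((i.val : ℤ) - ((i'.val : ℤ) + k * p)) *
      (((j.val : ℤ) + w * q) - ((j'.val : ℤ) + (w' + k) * q))

/-- Validity of an asymptotic arc of the annulus. -/
def IsArc : AnnArc p q → Prop
  | lowerPeri i j => j ≠ i ∧ j ≠ i + 1
  | upperPeri i j => j ≠ i ∧ j ≠ i + 1
  | _ => True

/-- Strictly asymptotic arcs: Prüfer and adic arcs. -/
def IsStrict : AnnArc p q → Prop
  | lowerPrufer _ => True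
  | lowerAdic _ => True
  | upperPrufer _ => True
  | upperAdic _ => True
  | _ => False

/-- Bridging arcs. -/
def IsBridging : AnnArc p q → Prop
  | bridging _ _ _ => True
  | _ => False

/-- Peripheral arcs. -/
def IsPeri : AnnArc p q → Prop
  | lowerPeri _ _ => True
  | upperPeri _ _ => True
  | _ => False

/-- Arcs based at the lower boundary `∂`. -/
def BasedLower : AnnArc p q → Prop
  | lowerPeri _ _ => True
  | lowerPrufer _ => True
  | lowerAdic _ => True
  | _ => False

/-- Arcs based at the upper boundary `∂'`. -/
def BasedUpper : AnnArc p q → Prop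
  | upperPeri _ _ => True
  | upperPrufer _ => True
  | upperAdic _ => True
  | _ => False

/-- Compatibility of asymptotic arcs of the annulus: same-boundary peripheral
arcs as in the tube model; bridging arcs compatible with a peripheral arc iff
the relevant endpoint lies outside the covered interval; bridging arcs
pairwise non-crossing in the universal cover; Prüfer/adic arcs compatible with
a peripheral arc on their boundary iff the basepoint is outside the covered
interval; bridging arcs incompatible with every strictly asymptotic arc;
Prüfer–Prüfer and adic–adic pairs always compatible; on one boundary
`π m` is compatible with `α m'` iff `m = m'`; arcs based at different
boundaries are always compatible. -/
def Compatible : AnnArc p q → AnnArc p q → Prop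
  | lowerPeri i j, lowerPeri k l => periCompat i j k l
  | upperPeri i j, upperPeri k l => periCompat i j k l
  | lowerPeri a b, bridging i _ _ => ¬ Between a b i
  | bridging i _ _, lowerPeri a b => ¬ Between a b i
  | upperPeri a b, bridging _ j _ => ¬ Between a b j
  | bridging _ j _, upperPeri a b => ¬ Between a b j
  | bridging i j w, bridging i' j' w' => bridgeCompat p q i j w i' j' w'
  | lowerPeri a b, lowerPrufer m => ¬ Between a b m
  | lowerPrufer m, lowerPeri a b => ¬ Between a b m
  | lowerPeri a b, lowerAdic m => ¬ Between a b m
  | lowerAdic m, lowerPeri a b => ¬ Between a b m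
  | upperPeri a b, upperPrufer m => ¬ Between a b m
  | upperPrufer m, upperPeri a b => ¬ Between a b m
  | upperPeri a b, upperAdic m => ¬ Between a b m
  | upperAdic m, upperPeri a b => ¬ Between a b m
  | bridging _ _ _, lowerPrufer _ => False
  | lowerPrufer _, bridging _ _ _ => False
  | bridging _ _ _, lowerAdic _ => False
  | lowerAdic _, bridging _ _ _ => False
  | bridging _ _ _, upperPrufer _ => False
  | upperPrufer _, bridging _ _ _ => False
  | bridging _ _ _, upperAdic _ => False
  | upperAdic _, bridging _ _ _ => False
  | lowerPrufer m, lowerAdic m' => m = m'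
  | lowerAdic m, lowerPrufer m' => m = m'
  | upperPrufer m, upperAdic m' => m = m'
  | upperAdic m, upperPrufer m' => m = m'
  | _, _ => True

end AnnArc

/-- An asymptotic triangulation of the annulus: a maximal collection of pairwise
distinct compatible asymptotic arcs. -/
structure IsAsympTriangulation {p q : ℕ} (T : Set (AnnArc p q)) : Prop where
  isArc : ∀ a ∈ T, a.IsArc
  compat : ∀ a ∈ T, ∀ b ∈ T, a ≠ b → a.Compatible b
  maximal : ∀ a : AnnArc p q, a.IsArc → (∀ b ∈ T, a ≠ b → a.Compatible b) → a ∈ T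

/-- An ordinary triangulation of the annulus: a maximal collection of pairwise
distinct compatible ordinary (peripheral or bridging) arcs. -/
structure IsTriangulation {p q : ℕ} (T : Set (AnnArc p q)) : Prop where
  isArc : ∀ a ∈ T, a.IsArc
  ordinary : ∀ a ∈ T, ¬ a.IsStrict
  compat : ∀ a ∈ T, ∀ b ∈ T, a ≠ b → a.Compatible b
  maximal : ∀ a : AnnArc p q, a.IsArc → ¬ a.IsStrict →
    (∀ b ∈ T, a ≠ b → a.Compatible b) → a ∈ T

/-- A maximal compatible collection of asymptotic arcs based at one boundary
(a partial asymptotic triangulation based at that boundary). -/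
def MaximalBased {p q : ℕ} (based : AnnArc p q → Prop) (S : Set (AnnArc p q)) : Prop :=
  (∀ a ∈ S, a.IsArc ∧ based a) ∧
  (∀ a ∈ S, ∀ b ∈ S, a ≠ b → a.Compatible b) ∧
  (∀ a : AnnArc p q, a.IsArc → based a → (∀ b ∈ S, a ≠ b → a.Compatible b) → a ∈ S)

/-- Two (asymptotic) triangulations are adjacent in the exchange graph iff they
differ in exactly one arc. -/
def ExchangeAdj {p q : ℕ} (T T' : Set (AnnArc p q)) : Prop :=
  ∃ θ ∈ T, ∃ θ' ∈ T', θ ≠ θ' ∧ T \ {θ} = T' \ {θ'}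

/-!
Lift every bridging arc to the points `(i + k p, j + w q + k q)` of the universal cover `ℤ²` of
the annulus. Two bridging arcs are compatible iff all their lifts are comparable in the product
order, so the lifts of the bridging arcs of `T` form a `(p, q)`-periodic chain `Λ ⊆ ℤ²`.
Maximality of `T` forces consecutive points of `Λ` to differ in a single coordinate: otherwise the
corner `(z.1, z'.2)` between them would be a compatible bridging arc. Along such a staircase the
number of points is one less than the number of distinct abscissae plus the number of distinct
ordinates. Over one period of `Λ` this says that the number of bridging arcs equals the number of
their endpoints on `∂` plus the number of their endpoints on `∂'`, i.e. the number of Prüfer arcs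
in `D_z^{+∞} · T`.
-/

open Set

theorem Prod.le_of_toLex_le {α β : Type*} [PartialOrder α] [PartialOrder β] {x y : α × β}
    (h : toLex x ≤ toLex y) (hxy : x ≤ y ∨ y ≤ x) : x ≤ y := by
  rcases hxy with hxy | hyx
  · exact hxy
  · rw [toLex_inj.1 (h.antisymm (Prod.Lex.toLex_mono hyx))]

theorem Prod.le_or_le_iff_zero_le_mul_sub {R : Type*} [Ring R] [LinearOrder R]
    [IsStrictOrderedRing R] {z z' : R × R} :
    z ≤ z' ∨ z' ≤ z ↔ 0 ≤ (z'.1 - z.1) * (z'.2 - z.2) := by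
  rw [mul_nonneg_iff, Prod.le_def, Prod.le_def, sub_nonneg, sub_nonneg, sub_nonpos, sub_nonpos]

open Finset in
theorem Finset.card_add_one_eq_card_image_fst_add_card_image_snd {α β : Type*}
    [LinearOrder α] [LinearOrder β] {C : Finset (α × β)} (hne : C.Nonempty)
    (hchain : IsChain (· ≤ ·) (C : Set (α × β)))
    (hsat : ∀ z ∈ C, ∀ z' ∈ C, z.1 < z'.1 → z.2 < z'.2 → ∃ u ∈ C, z < u ∧ u < z') :
    #C + 1 = #(C.image Prod.fst) + #(C.image Prod.snd) := by
  induction C using Finset.induction_on_max_value (f := (toLex : α × β → α ×ₗ β)) with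
  | empty => simp at hne
  | insert a s ha hmax ih =>
    rcases s.eq_empty_or_nonempty with rfl | hs
    · simp
    have hsub : (s : Set (α × β)) ⊆ ↑(insert a s) := by simp [Set.subset_insert]
    have hle : ∀ x ∈ s, x ≤ a := fun x hx =>
      Prod.le_of_toLex_le (hmax x hx) (hchain.total (hsub hx) (mem_coe.2 (mem_insert_self a s)))
    obtain ⟨b, hb, hbmax⟩ := s.exists_max_image toLex hs
    have hleb : ∀ x ∈ s, x ≤ b := fun x hx =>
      Prod.le_of_toLex_le (hbmax x hx) ((hchain.mono hsub).total hx hb)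
    have hba : b < a := (hle b hb).lt_of_ne (by rintro rfl; exact ha hb)
    have hsat_s : ∀ z ∈ s, ∀ z' ∈ s, z.1 < z'.1 → z.2 < z'.2 → ∃ u ∈ s, z < u ∧ u < z' := by
      intro z hz z' hz' h₁ h₂
      obtain ⟨u, hu, hzu, huz'⟩ := hsat z (hsub hz) z' (hsub hz') h₁ h₂
      rcases mem_insert.1 hu with rfl | hu
      · exact absurd (huz'.trans_le (hle z' hz')) (lt_irrefl _)
      · exact ⟨u, hu, hzu, huz'⟩
    have hstep : b.1 = a.1 ∨ b.2 = a.2 := by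
      by_contra! h
      obtain ⟨u, hu, hbu, hua⟩ := hsat b (mem_insert_of_mem hb) a (mem_insert_self a s)
        (hba.le.1.lt_of_ne h.1) (hba.le.2.lt_of_ne h.2)
      rcases mem_insert.1 hu with rfl | hu
      · exact lt_irrefl _ hua
      · exact (hleb u hu).not_gt hbu
    rw [card_insert_of_notMem ha, image_insert, image_insert, ih hs (hchain.mono hsub) hsat_s]
    rcases hstep with h | h
    · have hnew : a.2 ∉ s.image Prod.snd := by
        simp only [mem_image, not_exists, not_and]
        exact fun x hx hxa => (hleb x hx).2.not_gt (hxa ▸ hba.le.2.lt_of_ne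
          fun h' => hba.ne (Prod.ext h h'))
      rw [insert_eq_of_mem (mem_image.2 ⟨b, hb, h⟩), card_insert_of_notMem hnew]
      ring
    · have hnew : a.1 ∉ s.image Prod.fst := by
        simp only [mem_image, not_exists, not_and]
        exact fun x hx hxa => (hleb x hx).1.not_gt (hxa ▸ hba.le.1.lt_of_ne
          fun h' => hba.ne (Prod.ext h' h))
      rw [insert_eq_of_mem (mem_image.2 ⟨b, hb, h⟩), card_insert_of_notMem hnew]
      ring

theorem IsChain.image_inter_Icc {α β : Type*} [Preorder α] [PartialOrder β] {s : Set α}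
    (hs : IsChain (· ≤ ·) s) {f : α → β} (hf : Monotone f) {a b : α} (ha : a ∈ s) (hb : b ∈ s)
    (hab : a ≤ b) : f '' (s ∩ Icc a b) = f '' s ∩ Icc (f a) (f b) := by
  ext y
  constructor
  · rintro ⟨x, ⟨hx, hax, hxb⟩, rfl⟩
    exact ⟨⟨x, hx, rfl⟩, hf hax, hf hxb⟩
  · rintro ⟨⟨x, hx, rfl⟩, hfax, hfxb⟩
    rcases hs.total hx ha with hxa | hax
    · exact ⟨a, ⟨ha, le_rfl, hab⟩, hfax.antisymm (hf hxa)⟩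
    rcases hs.total hx hb with hxb | hbx
    · exact ⟨x, ⟨hx, hax, hxb⟩, rfl⟩
    · exact ⟨b, ⟨hb, hab, le_rfl⟩, hfxb.antisymm' (hf hbx)⟩

section PeriodicChain

variable {G : Type*} [AddCommGroup G] [PartialOrder G] [IsOrderedAddMonoid G]
  {Λ : Set G} {v : G}

theorem IsChain.exists_add_zsmul_mem_Ico (hchain : IsChain (· ≤ ·) Λ)
    (hper : ∀ z ∈ Λ, ∀ k : ℤ, z + k • v ∈ Λ) (hv : 0 < v) (harch : ∀ x : G, ∃ n : ℕ, x ≤ n • v)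
    {m u : G} (hm : m ∈ Λ) (hu : u ∈ Λ) : ∃ k : ℤ, u + k • v ∈ Ico m (m + v) := by
  obtain ⟨n, hn⟩ := harch (u - m)
  obtain ⟨n', hn'⟩ := harch (m - u)
  have hbdd : ∀ k : ℤ, m ≤ u + k • v → -(n : ℤ) ≤ k := by
    intro k hk
    by_contra! hlt
    have hnonneg : (0 : G) ≤ ((n : ℤ) + k) • v := calc
      (0 : G) ≤ (u - m) + k • v := by rw [sub_add_eq_add_sub]; exact sub_nonneg.2 hk
      _ ≤ (n : ℤ) • v + k • v := by rw [natCast_zsmul]; gcongr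
      _ = ((n : ℤ) + k) • v := (add_smul _ _ _).symm
    have hneg : ((n : ℤ) + k) • v ≤ (-1 : ℤ) • v := zsmul_le_zsmul_left hv.le (by omega)
    rw [neg_one_zsmul] at hneg
    exact (neg_neg_iff_pos.2 hv).not_ge (hnonneg.trans hneg)
  -- the least `k` with `m ≤ u + k • v` works
  obtain ⟨k, hk, hkmin⟩ := Int.exists_least_of_bdd ⟨_, hbdd⟩
    ⟨(n' : ℤ), by rw [natCast_zsmul]; exact sub_le_iff_le_add'.1 hn'⟩
  have hprev : u + (k - 1) • v < m := by
    have hnot : ¬ m ≤ u + (k - 1) • v := fun h => by linarith [hkmin _ h]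
    exact ((hchain.total hm (hper u hu _)).resolve_left hnot).lt_of_not_ge hnot
  refine ⟨k, hk, ?_⟩
  calc u + k • v = u + (k - 1) • v + v := by rw [sub_smul, one_smul]; abel
    _ < m + v := by gcongr

theorem nonpos_of_add_zsmul_mem_Ico (hv : 0 ≤ v) {m z : G} {k : ℤ} (hz : z ∈ Ico m (m + v))
    (hzk : z + k • v ∈ Ico m (m + v)) : k ≤ 0 := by
  by_contra! hk
  have : m + v ≤ z + k • v := calc
    m + v ≤ z + (1 : ℤ) • v := by rw [one_zsmul]; gcongr; exact hz.1
    _ ≤ z + k • v := by gcongr; omega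
  exact this.not_gt hzk.2

theorem IsChain.ncard_inter_Icc_eq_ncard_image_add_one [LocallyFiniteOrder G]
    (hchain : IsChain (· ≤ ·) Λ) (hper : ∀ z ∈ Λ, ∀ k : ℤ, z + k • v ∈ Λ) (hv : 0 < v)
    (harch : ∀ x : G, ∃ n : ℕ, x ≤ n • v) {γ : Type*} {f : G → γ}
    (hf : ∀ z z', f z = f z' ↔ ∃ k : ℤ, z' = z + k • v) {m : G} (hm : m ∈ Λ) :
    (Λ ∩ Icc m (m + v)).ncard = (f '' Λ).ncard + 1 := by
  have hmv : m + v ∈ Λ := by simpa using hper m hm 1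
  have hinj : InjOn f (Λ ∩ Ico m (m + v)) := by
    intro z hz z' hz' hzz'
    obtain ⟨k, rfl⟩ := (hf z z').1 hzz'
    have hk : k ≤ 0 := nonpos_of_add_zsmul_mem_Ico hv.le hz.2 hz'.2
    have hk' : -k ≤ 0 := nonpos_of_add_zsmul_mem_Ico hv.le hz'.2 (by simpa using hz.2)
    obtain rfl : k = 0 := by omega
    simp
  have himage : f '' (Λ ∩ Ico m (m + v)) = f '' Λ := by
    refine (image_mono inter_subset_left).antisymm ?_
    rintro _ ⟨u, hu, rfl⟩
    obtain ⟨k, hk⟩ := hchain.exists_add_zsmul_mem_Ico hper hv harch hm hu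
    exact ⟨u + k • v, ⟨hper u hu k, hk⟩, (hf _ _).2 ⟨-k, by simp⟩⟩
  rw [← Ico_insert_right (le_add_of_nonneg_right hv.le), inter_insert_of_mem hmv,
    ncard_insert_of_notMem (fun h => lt_irrefl _ h.2.2)
      ((finite_Ico m (m + v)).subset inter_subset_right),
    ← himage, hinj.ncard_image]

end PeriodicChain

theorem ZMod.intCast_eq_intCast_iff_exists_add_zsmul {n : ℕ} {a b : ℤ} :
    (a : ZMod n) = b ↔ ∃ k : ℤ, b = a + k • (n : ℤ) := by
  rw [ZMod.intCast_eq_intCast_iff_dvd_sub]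
  constructor
  · rintro ⟨k, hk⟩
    exact ⟨k, by rw [smul_eq_mul]; linarith⟩
  · rintro ⟨k, rfl⟩
    exact ⟨k, by rw [smul_eq_mul]; ring⟩

theorem Prod.exists_le_nsmul {α β : Type*} [AddCommMonoid α] [PartialOrder α]
    [IsOrderedAddMonoid α] [Archimedean α] [AddCommMonoid β] [PartialOrder β]
    [IsOrderedAddMonoid β] [Archimedean β] {v : α × β} (h₁ : 0 < v.1) (h₂ : 0 < v.2)
    (x : α × β) : ∃ n : ℕ, x ≤ n • v := by
  obtain ⟨n₁, hn₁⟩ := Archimedean.arch x.1 h₁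
  obtain ⟨n₂, hn₂⟩ := Archimedean.arch x.2 h₂
  refine ⟨n₁ + n₂, hn₁.trans ?_, hn₂.trans ?_⟩ <;> simp only [Prod.smul_fst, Prod.smul_snd] <;>
    gcongr <;> omega

theorem IsChain.ncard_image_inter_Icc_eq_ncard_image_intCast_add_one {Λ : Set (ℤ × ℤ)}
    {v : ℤ × ℤ} (hchain : IsChain (· ≤ ·) Λ) (hper : ∀ z ∈ Λ, ∀ k : ℤ, z + k • v ∈ Λ)
    (hv : 0 ≤ v) {π : ℤ × ℤ → ℤ} (hπ : Monotone π) {n : ℕ} [NeZero n]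
    (hπv : ∀ z (k : ℤ), π (z + k • v) = π z + k • (n : ℤ)) {m : ℤ × ℤ} (hm : m ∈ Λ) :
    (π '' (Λ ∩ Icc m (m + v))).ncard = ((fun z => (π z : ZMod n)) '' Λ).ncard + 1 := by
  have hn : (0 : ℤ) < n := by exact_mod_cast NeZero.pos n
  have hmv : m + v ∈ Λ := by simpa using hper m hm 1
  rw [hchain.image_inter_Icc hπ hm hmv (le_add_of_nonneg_right hv),
    show π (m + v) = π m + n by simpa using hπv m 1, ← image_image (fun a : ℤ => (a : ZMod n))]
  refine (isChain_of_trichotomous _).ncard_inter_Icc_eq_ncard_image_add_one ?_ hn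
    (fun x => Archimedean.arch x hn) (fun _ _ => ZMod.intCast_eq_intCast_iff_exists_add_zsmul)
    ⟨m, hm, rfl⟩
  rintro _ ⟨z, hz, rfl⟩ k
  exact ⟨_, hper z hz k, hπv z k⟩

theorem IsChain.ncard_image_eq_ncard_image_fst_add_ncard_image_snd (p q : ℕ) [NeZero p]
    [NeZero q] {Λ : Set (ℤ × ℤ)} (hchain : IsChain (· ≤ ·) Λ)
    (hper : ∀ z ∈ Λ, ∀ k : ℤ, z + k • ((p : ℤ), (q : ℤ)) ∈ Λ)
    (hsat : ∀ z ∈ Λ, ∀ z' ∈ Λ, z.1 < z'.1 → z.2 < z'.2 → ∃ u ∈ Λ, z < u ∧ u < z')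
    {γ : Type*} {f : ℤ × ℤ → γ}
    (hf : ∀ z z', f z = f z' ↔ ∃ k : ℤ, z' = z + k • ((p : ℤ), (q : ℤ))) :
    (f '' Λ).ncard = ((fun z : ℤ × ℤ => (z.1 : ZMod p)) '' Λ).ncard
      + ((fun z : ℤ × ℤ => (z.2 : ZMod q)) '' Λ).ncard := by
  rcases Λ.eq_empty_or_nonempty with rfl | ⟨m, hm⟩
  · simp
  set v : ℤ × ℤ := ((p : ℤ), (q : ℤ))
  have hv : 0 < v := Prod.lt_iff.2 (Or.inl ⟨by simp [v, NeZero.pos], by simp [v]⟩)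
  -- the window `W` is one period of `Λ` together with its right endpoint
  set W := Λ ∩ Icc m (m + v)
  obtain ⟨C, hC⟩ := ((finite_Icc m (m + v)).subset (inter_subset_right (s := Λ))).exists_finset_coe
  have hstaircase := C.card_add_one_eq_card_image_fst_add_card_image_snd
    ⟨m, by rw [← Finset.mem_coe, hC]; exact ⟨hm, le_rfl, le_add_of_nonneg_right hv.le⟩⟩
    (hC ▸ hchain.mono inter_subset_left) (by
      simp only [← Finset.mem_coe, hC]
      intro z hz z' hz' h₁ h₂
      obtain ⟨u, hu, hzu, huz'⟩ := hsat z hz.1 z' hz'.1 h₁ h₂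
      exact ⟨u, ⟨hu, hz.2.1.trans hzu.le, huz'.le.trans hz'.2.2⟩, hzu, huz'⟩)
  have hW : W.ncard = (f '' Λ).ncard + 1 := hchain.ncard_inter_Icc_eq_ncard_image_add_one hper hv
    (Prod.exists_le_nsmul (by simp [v, NeZero.pos]) (by simp [v, NeZero.pos])) hf hm
  have hfst : (Prod.fst '' W).ncard = ((fun z : ℤ × ℤ => (z.1 : ZMod p)) '' Λ).ncard + 1 :=
    hchain.ncard_image_inter_Icc_eq_ncard_image_intCast_add_one hper hv.le monotone_fst
      (fun _ _ => rfl) hm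
  have hsnd : (Prod.snd '' W).ncard = ((fun z : ℤ × ℤ => (z.2 : ZMod q)) '' Λ).ncard + 1 :=
    hchain.ncard_image_inter_Icc_eq_ncard_image_intCast_add_one hper hv.le monotone_snd
      (fun _ _ => rfl) hm
  rw [← ncard_coe_finset, ← ncard_coe_finset, ← ncard_coe_finset, Finset.coe_image,
    Finset.coe_image, hC, hW, hfst, hsnd] at hstaircase
  omega

namespace AnnArc

-- The bridging arc with a lift through `z` in the universal cover `ℤ²`; the winding number is
-- normalised so that `z` and `z + (p, q)` give the same arc.
def liftArc (p q : ℕ) (z : ℤ × ℤ) : AnnArc p q :=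
  bridging z.1 z.2 (z.2 / q - z.1 / p)

variable {p q : ℕ} [NeZero p] [NeZero q]

theorem liftArc_eq_liftArc_iff {z z' : ℤ × ℤ} :
    liftArc p q z = liftArc p q z' ↔ ∃ k : ℤ, z' = z + k • ((p : ℤ), (q : ℤ)) := by
  have hp : (p : ℤ) ≠ 0 := by exact_mod_cast NeZero.ne p
  have hq : (q : ℤ) ≠ 0 := by exact_mod_cast NeZero.ne q
  simp only [liftArc, bridging.injEq, ZMod.intCast_eq_intCast_iff_exists_add_zsmul, smul_eq_mul]
  constructor
  · rintro ⟨⟨k, hk⟩, ⟨l, hl⟩, hw⟩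
    rw [hk, hl, Int.add_mul_ediv_right _ _ hp, Int.add_mul_ediv_right _ _ hq] at hw
    obtain rfl : l = k := by omega
    exact ⟨l, Prod.ext hk hl⟩
  · rintro ⟨k, rfl⟩
    refine ⟨⟨k, rfl⟩, ⟨k, rfl⟩, ?_⟩
    simp only [Prod.fst_add, Prod.snd_add, Prod.smul_fst, Prod.smul_snd, smul_eq_mul,
      Int.add_mul_ediv_right _ _ hp, Int.add_mul_ediv_right _ _ hq]
    ring

theorem liftArc_add_zsmul (z : ℤ × ℤ) (k : ℤ) :
    liftArc p q (z + k • ((p : ℤ), (q : ℤ))) = liftArc p q z :=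
  (liftArc_eq_liftArc_iff.2 ⟨k, rfl⟩).symm

theorem bridging_eq_liftArc (i : ZMod p) (j : ZMod q) (w : ℤ) :
    bridging i j w = liftArc p q (i.val, j.val + w * q) := by
  have hq : (q : ℤ) ≠ 0 := by exact_mod_cast NeZero.ne q
  have hi : (i.val : ℤ) / p = 0 :=
    Int.ediv_eq_zero_of_lt (by positivity) (by exact_mod_cast ZMod.val_lt i)
  have hj : (j.val : ℤ) / q = 0 :=
    Int.ediv_eq_zero_of_lt (by positivity) (by exact_mod_cast ZMod.val_lt j)
  simp only [liftArc, Int.cast_add, Int.cast_mul, Int.cast_natCast, ZMod.natCast_zmod_val,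
    ZMod.natCast_self, mul_zero, add_zero, Int.add_mul_ediv_right _ _ hq, hi, hj, zero_add,
    sub_zero]

theorem range_liftArc : range (liftArc p q) = {a | a.IsBridging} := by
  ext a
  constructor
  · rintro ⟨z, rfl⟩
    trivial
  · intro ha
    cases a with
    | bridging i j w => exact ⟨_, (bridging_eq_liftArc i j w).symm⟩
    | _ => exact ha.elim

theorem compatible_liftArc_iff {z z' : ℤ × ℤ} :
    (liftArc p q z).Compatible (liftArc p q z') ↔
      ∀ k : ℤ, z ≤ z' + k • ((p : ℤ), (q : ℤ)) ∨ z' + k • ((p : ℤ), (q : ℤ)) ≤ z := by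
  simp only [liftArc, Compatible, bridgeCompat]
  -- `bridgeCompat` compares the lifts `z - (z.1 / p) • (p, q)`, whence the shift of `k`
  refine (Equiv.addRight (z.1 / p - z'.1 / p)).forall_congr fun k => ?_
  rw [Equiv.coe_addRight, Prod.le_or_le_iff_zero_le_mul_sub, ZMod.val_intCast, ZMod.val_intCast,
    ZMod.val_intCast, ZMod.val_intCast, Int.emod_def, Int.emod_def, Int.emod_def, Int.emod_def]
  refine Iff.of_eq (congrArg _ ?_)
  simp only [Prod.fst_add, Prod.snd_add, Prod.smul_fst, Prod.smul_snd, smul_eq_mul]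
  ring

theorem compatible_liftArc_self (z : ℤ × ℤ) : (liftArc p q z).Compatible (liftArc p q z) := by
  rw [compatible_liftArc_iff]
  intro k
  rw [Prod.le_or_le_iff_zero_le_mul_sub]
  simp only [Prod.fst_add, Prod.snd_add, Prod.smul_fst, Prod.smul_snd, smul_eq_mul,
    add_sub_cancel_left]
  nlinarith [mul_nonneg (mul_self_nonneg k) (by positivity : (0 : ℤ) ≤ p * q)]

end AnnArc

namespace IsTriangulation

open AnnArc

variable {p q : ℕ} [NeZero p] [NeZero q] {T : Set (AnnArc p q)}

theorem compatible_liftArc (hT : IsTriangulation T) {z z' : ℤ × ℤ} (hz : liftArc p q z ∈ T)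
    (hz' : liftArc p q z' ∈ T) : (liftArc p q z).Compatible (liftArc p q z') := by
  by_cases h : liftArc p q z = liftArc p q z'
  · rw [← h]
    exact compatible_liftArc_self z
  · exact hT.compat _ hz _ hz' h

theorem isChain_preimage_liftArc (hT : IsTriangulation T) :
    IsChain (· ≤ ·) (liftArc p q ⁻¹' T) := fun z hz z' hz' _ => by
  simpa using compatible_liftArc_iff.1 (hT.compatible_liftArc hz hz') 0

theorem exists_lt_lt_of_lt_of_lt (hT : IsTriangulation T) {z z' : ℤ × ℤ}
    (hz : liftArc p q z ∈ T) (hz' : liftArc p q z' ∈ T) (h₁ : z.1 < z'.1) (h₂ : z.2 < z'.2) :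
    ∃ u ∈ liftArc p q ⁻¹' T, z < u ∧ u < z' := by
  by_contra! hnone
  set w : ℤ × ℤ := (z.1, z'.2)
  have hzw : z < w := Prod.lt_iff.2 (Or.inr ⟨le_rfl, h₂⟩)
  have hwz' : w < z' := Prod.lt_iff.2 (Or.inl ⟨h₁, le_rfl⟩)
  have hcomp : ∀ u ∈ liftArc p q ⁻¹' T, w ≤ u ∨ u ≤ w := by
    intro u hu
    rcases hT.isChain_preimage_liftArc.total hu hz with huz | hzu
    · exact Or.inr (huz.trans hzw.le)
    rcases hT.isChain_preimage_liftArc.total hz' hu with hz'u | huz'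
    · exact Or.inl (hwz'.le.trans hz'u)
    rcases hzu.lt_or_eq with hzu | rfl
    · rcases huz'.lt_or_eq with huz' | rfl
      · exact absurd huz' (hnone u hu hzu)
      · exact Or.inl hwz'.le
    · exact Or.inr hzw.le
  have hw : liftArc p q w ∈ T := by
    refine hT.maximal _ trivial id fun b hb _ => ?_
    cases b with
    | lowerPeri a b => exact hT.compat _ hz _ hb (by simp [liftArc])
    | upperPeri a b => exact hT.compat _ hz' _ hb (by simp [liftArc])
    | bridging i j k =>
      rw [bridging_eq_liftArc] at hb ⊢
      exact compatible_liftArc_iff.2 fun l =>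
        hcomp _ (by rwa [mem_preimage, liftArc_add_zsmul])
    | _ => exact (hT.ordinary _ hb trivial).elim
  exact hnone w hw hzw hwz'

end IsTriangulation

/-- For a triangulation `T` of the annulus `C_{p,q}` (`p,q ≥ 1`), the number
of Prüfer arcs in `D_z^{+∞} · T` (i.e. the number of Prüfer arcs based at
endpoints of bridging arcs of `T`, over both boundaries) equals the number of
bridging arcs of `T`. -/
theorem annulus_prufer_count_eq_bridging_count (p q : ℕ) [NeZero p] [NeZero q]
    (T : Set (AnnArc p q)) (hT : IsTriangulation T) :
    {a : AnnArc p q | ∃ (i : ZMod p) (j : ZMod q) (w : ℤ),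
        AnnArc.bridging i j w ∈ T ∧
        (a = AnnArc.lowerPrufer i ∨ a = AnnArc.upperPrufer j)}.ncard
      = {a ∈ T | a.IsBridging}.ncard := by
  set Λ := AnnArc.liftArc p q ⁻¹' T
  have hprufer : {a : AnnArc p q | ∃ (i : ZMod p) (j : ZMod q) (w : ℤ),
      AnnArc.bridging i j w ∈ T ∧ (a = AnnArc.lowerPrufer i ∨ a = AnnArc.upperPrufer j)} =
      AnnArc.lowerPrufer '' ((fun z : ℤ × ℤ => (z.1 : ZMod p)) '' Λ) ∪
        AnnArc.upperPrufer '' ((fun z : ℤ × ℤ => (z.2 : ZMod q)) '' Λ) := by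
    ext a
    constructor
    · rintro ⟨i, j, w, hb, rfl | rfl⟩ <;> rw [AnnArc.bridging_eq_liftArc] at hb
      · exact Or.inl ⟨_, ⟨_, hb, rfl⟩, by simp⟩
      · exact Or.inr ⟨_, ⟨_, hb, rfl⟩, by simp⟩
    · rintro (⟨_, ⟨z, hz, rfl⟩, rfl⟩ | ⟨_, ⟨z, hz, rfl⟩, rfl⟩)
      · exact ⟨_, _, _, hz, Or.inl rfl⟩
      · exact ⟨_, _, _, hz, Or.inr rfl⟩
  have hbridging : {a ∈ T | a.IsBridging} = AnnArc.liftArc p q '' Λ := by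
    rw [image_preimage_eq_inter_range, AnnArc.range_liftArc]
    rfl
  rw [hprufer, hbridging, ncard_union_eq (disjoint_left.2 (by rintro _ ⟨_, _, rfl⟩ ⟨_, _, ⟨⟩⟩))
      (toFinite _) (toFinite _), ncard_image_of_injective _ fun _ _ => AnnArc.lowerPrufer.inj,
    ncard_image_of_injective _ fun _ _ => AnnArc.upperPrufer.inj]
  exact (hT.isChain_preimage_liftArc.ncard_image_eq_ncard_image_fst_add_ncard_image_snd p q
    (fun z hz k => by rwa [mem_preimage, AnnArc.liftArc_add_zsmul])
    (fun _ hz _ hz' => hT.exists_lt_lt_of_lt_of_lt hz hz')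
    fun _ _ => AnnArc.liftArc_eq_liftArc_iff).symm
end

section
/- In the annulus C_{1,1} with one marked point on each boundary, the set of limits of converging sequences of triangulations equals T(C_{1,1}) together with exactly two strictly asymptotic triangulations ({π_o, π_ι} and {α_o, α_ι}), whereas the set of all asymptotic triangulations contains four strictly asymptotic triangulations; hence not every strictly asymptotic triangulation is a limit of triangulations. -/
/-- Asymptotic arcs of the annulus `C_{1,1}`: bridging arcs `γ n` (indexed by
winding number), and strictly asymptotic arcs `π_o, α_o, π_ι, α_ι`. -/
inductive Arc11 : Type
  | bridge (n : ℤ) : Arc11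
  | pruferO : Arc11
  | adicO : Arc11
  | pruferI : Arc11
  | adicI : Arc11
  deriving DecidableEq

namespace Arc11

/-- Compatibility: `γ n` and `γ m` compatible iff `|n - m| ≤ 1`; strictly
asymptotic arcs incompatible with every bridging arc; `π_o` incompatible with
`α_o` and `π_ι` incompatible with `α_ι`; all other strictly asymptotic pairs
compatible. -/
def Compatible : Arc11 → Arc11 → Prop
  | bridge n, bridge m => (n - m).natAbs ≤ 1
  | bridge _, _ => False
  | _, bridge _ => False
  | pruferO, adicO => False
  | adicO, pruferO => False
  | pruferI, adicI => False
  | adicI, pruferI => False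
  | _, _ => True

/-- The Dehn twist, shifting winding numbers of bridging arcs. -/
def shift (k : ℤ) : Arc11 → Arc11
  | bridge n => bridge (n + k)
  | a => a

end Arc11

/-- Triangulations of `C_{1,1}`: pairs `{γ n, γ (n+1)}`. -/
def IsTri11 (T : Set Arc11) : Prop :=
  ∃ n : ℤ, T = {Arc11.bridge n, Arc11.bridge (n + 1)}

/-- Asymptotic triangulations of `C_{1,1}`: maximal pairwise-compatible sets of
distinct asymptotic arcs. -/
def IsAsympTri11 (T : Set Arc11) : Prop :=
  (∀ a ∈ T, ∀ b ∈ T, a ≠ b → a.Compatible b) ∧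
  (∀ a : Arc11, (∀ b ∈ T, a ≠ b → a.Compatible b) → a ∈ T)

/-- `T` is the limit of a converging sequence of triangulations of `C_{1,1}`:
there is a sequence of triangulations, eventually of the form
`D_z^{d k} · S N` for a monotone `d`, whose limit (blueprint twisted by the
limit of `d`; the Prüfer, resp. adic, pair if `d → ±∞`) is `T`. -/
def IsLimit11 (T : Set Arc11) : Prop :=
  ∃ (S : ℕ → Set Arc11) (N : ℕ) (d : ℕ → ℤ),
    (∀ n, IsTri11 (S n)) ∧ (Monotone d ∨ Antitone d) ∧
    (∀ k : ℕ, S (N + k) = Arc11.shift (d k) '' S N) ∧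
    ((∃ c : ℤ, (∀ᶠ k in Filter.atTop, d k = c) ∧ T = Arc11.shift c '' S N) ∨
     (Filter.Tendsto d Filter.atTop Filter.atTop ∧ T = {Arc11.pruferO, Arc11.pruferI}) ∨
     (Filter.Tendsto d Filter.atTop Filter.atBot ∧ T = {Arc11.adicO, Arc11.adicI}))

/-!
A twist `D_z^c` maps the triangulation `{γ_n, γ_{n+1}}` to `{γ_{n+c}, γ_{n+c+1}}`, so the
limits are the triangulations (constant twist) together with the Prüfer and adic pairs
(twists `k ↦ k` and `k ↦ -k`).

An asymptotic triangulation is a maximal clique of the compatibility relation. A clique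
containing `γ_n` consists of bridging arcs within distance one of `γ_n`, hence lies in
`{γ_{n-1}, γ_n}` or `{γ_n, γ_{n+1}}`; a clique without bridging arcs takes at most one arc
from each boundary, hence lies in one of the four pairs `{π_o or α_o, π_ι or α_ι}`. All these
pairs are themselves maximal cliques, so they are exactly the asymptotic triangulations, and the
mixed pair `{π_o, α_ι}` is one that is not a limit.
-/

open Filter

theorem Set.Pairwise.eq_of_subset_of_maximal {α : Type*} {r : α → α → Prop} {T M : Set α}
    (hM : M.Pairwise r) (hTM : T ⊆ M) (hT : ∀ a, (∀ b ∈ T, a ≠ b → r a b) → a ∈ T) :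
    T = M :=
  hTM.antisymm fun a ha => hT a fun _ hb hab => hM ha (hTM hb) hab

namespace Arc11

theorem shift_zero : shift 0 = id := by
  funext a; cases a <;> simp [shift]

variable {T : Set Arc11}

theorem exists_subset_bridge_pair (hT : T.Pairwise Compatible) {n : ℤ} (hn : bridge n ∈ T) :
    ∃ m, T ⊆ {bridge m, bridge (m + 1)} := by
  have near : ∀ a ∈ T, ∃ m, a = bridge m ∧ (m - n).natAbs ≤ 1 := by
    intro a ha
    by_cases han : a = bridge n
    · exact ⟨n, han, by simp⟩
    cases a with
    | bridge m => exact ⟨m, rfl, hT ha hn han⟩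
    | _ => exact (hT ha hn han).elim
  by_cases hn₁ : bridge (n + 1) ∈ T
  · refine ⟨n, fun a ha => ?_⟩
    obtain ⟨m, rfl, hm⟩ := near a ha
    by_cases hmn : m = n + 1
    · simp [hmn]
    have : (m - (n + 1)).natAbs ≤ 1 := hT ha hn₁ (by simpa using hmn)
    simp only [Set.mem_insert_iff, Set.mem_singleton_iff, bridge.injEq]
    omega
  · refine ⟨n - 1, fun a ha => ?_⟩
    obtain ⟨m, rfl, hm⟩ := near a ha
    have hmn : m ≠ n + 1 := by rintro rfl; exact hn₁ ha
    simp only [Set.mem_insert_iff, Set.mem_singleton_iff, bridge.injEq]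
    omega

theorem exists_subset_strict_pair (hT : T.Pairwise Compatible) (hb : ∀ n, bridge n ∉ T) :
    ∃ M ∈ ({{pruferO, pruferI}, {adicO, adicI}, {pruferO, adicI}, {adicO, pruferI}} :
      Set (Set Arc11)), T ⊆ M := by
  classical
  have key : T ⊆ {if pruferO ∈ T then pruferO else adicO,
      if pruferI ∈ T then pruferI else adicI} := by
    intro a ha
    cases a with
    | bridge n => exact absurd ha (hb n)
    | pruferO | pruferI => simp [ha]
    | adicO =>
      have : pruferO ∉ T := fun h => hT ha h (by simp)
      simp [this]
    | adicI =>
      have : pruferI ∉ T := fun h => hT ha h (by simp)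
      simp [this]
  exact ⟨_, by split_ifs <;> simp, key⟩

end Arc11

open Arc11

theorem IsTri11.image_shift {S : Set Arc11} (hS : IsTri11 S) (k : ℤ) :
    IsTri11 (shift k '' S) := by
  obtain ⟨n, rfl⟩ := hS
  exact ⟨n + k, by rw [Set.image_pair]; simp only [shift]; ring_nf⟩

theorem isLimit11_of_twists {S₀ : Set Arc11} (hS₀ : IsTri11 S₀) {d : ℕ → ℤ} (hd₀ : d 0 = 0)
    (hd : Monotone d ∨ Antitone d) {T : Set Arc11}
    (hT : (∃ c : ℤ, (∀ᶠ k in atTop, d k = c) ∧ T = shift c '' S₀) ∨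
      (Tendsto d atTop atTop ∧ T = {pruferO, pruferI}) ∨
      (Tendsto d atTop atBot ∧ T = {adicO, adicI})) :
    IsLimit11 T :=
  ⟨fun k => shift (d k) '' S₀, 0, d, fun k => hS₀.image_shift (d k), hd,
    fun k => by simp [hd₀, shift_zero], by simpa [hd₀, shift_zero] using hT⟩

theorem isLimit11_iff (T : Set Arc11) :
    IsLimit11 T ↔ IsTri11 T ∨ T = {pruferO, pruferI} ∨ T = {adicO, adicI} := by
  have hS₀ : IsTri11 {bridge 0, bridge 1} := ⟨0, by norm_num⟩
  constructor
  · rintro ⟨S, N, d, hS, -, -, ⟨c, -, rfl⟩ | ⟨-, hT⟩ | ⟨-, hT⟩⟩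
    exacts [Or.inl ((hS N).image_shift c), Or.inr (Or.inl hT), Or.inr (Or.inr hT)]
  · rintro (hT | rfl | rfl)
    · exact isLimit11_of_twists hT (d := 0) rfl (Or.inl monotone_const)
        (Or.inl ⟨0, .of_forall fun _ => rfl, by simp [shift_zero]⟩)
    · exact isLimit11_of_twists hS₀ Nat.cast_zero (Or.inl Nat.mono_cast)
        (Or.inr (Or.inl ⟨tendsto_natCast_atTop_atTop, rfl⟩))
    · exact isLimit11_of_twists hS₀ (d := fun k => -(k : ℤ)) (by simp)
        (Or.inr fun _ _ h => neg_le_neg (Nat.mono_cast h))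
        (Or.inr (Or.inr ⟨tendsto_neg_atTop_atBot.comp tendsto_natCast_atTop_atTop, rfl⟩))

theorem isAsympTri11_pair {x y : Arc11} (hxy : x.Compatible y) (hyx : y.Compatible x)
    (hmax : ∀ a, a.Compatible x → a.Compatible y → a = x ∨ a = y) :
    IsAsympTri11 {x, y} := by
  refine ⟨Set.pairwise_pair.mpr fun _ => ⟨hxy, hyx⟩, fun a ha => ?_⟩
  by_cases hx : a = x
  · simp [hx]
  by_cases hy : a = y
  · simp [hy]
  exact absurd (hmax a (ha x (by simp) hx) (ha y (by simp) hy)) (by simp [hx, hy])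

theorem isAsympTri11_bridge_pair (n : ℤ) :
    IsAsympTri11 {bridge n, bridge (n + 1)} :=
  isAsympTri11_pair (by simp [Compatible]) (by simp [Compatible]) fun a => by
    cases a <;> simp [Compatible]
    omega

theorem isAsympTri11_of_mem_strict {M : Set Arc11}
    (hM : M ∈ ({{pruferO, pruferI}, {adicO, adicI}, {pruferO, adicI}, {adicO, pruferI}} :
      Set (Set Arc11))) :
    IsAsympTri11 M := by
  rcases hM with rfl | rfl | rfl | rfl <;>
    exact isAsympTri11_pair trivial trivial fun a => by cases a <;> simp [Compatible]

theorem isAsympTri11_iff (T : Set Arc11) :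
    IsAsympTri11 T ↔ IsTri11 T ∨
      T ∈ ({{pruferO, pruferI}, {adicO, adicI}, {pruferO, adicI}, {adicO, pruferI}} :
        Set (Set Arc11)) := by
  refine ⟨fun hT => ?_, ?_⟩
  · have eq_of_subset {M} (hM : IsAsympTri11 M) (hTM : T ⊆ M) : T = M :=
      Set.Pairwise.eq_of_subset_of_maximal hM.1 hTM hT.2
    by_cases hb : ∃ n, bridge n ∈ T
    · obtain ⟨n, hn⟩ := hb
      obtain ⟨m, hm⟩ := exists_subset_bridge_pair hT.1 hn
      exact Or.inl ⟨m, eq_of_subset (isAsympTri11_bridge_pair m) hm⟩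
    · push Not at hb
      obtain ⟨M, hM, hTM⟩ := exists_subset_strict_pair hT.1 hb
      exact Or.inr (eq_of_subset (isAsympTri11_of_mem_strict hM) hTM ▸ hM)
  · rintro (⟨n, rfl⟩ | hT)
    exacts [isAsympTri11_bridge_pair n, isAsympTri11_of_mem_strict hT]

/-- In `C_{1,1}` the set of limits of converging sequences of triangulations is
`T(C_{1,1})` together with exactly the two strictly asymptotic triangulations
`{π_o, π_ι}` and `{α_o, α_ι}`, whereas there are four strictly asymptotic
triangulations; hence some strictly asymptotic triangulation is not a limit of
triangulations. -/
theorem c11_limits :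
    ({T : Set Arc11 | IsLimit11 T}
      = {T | IsTri11 T} ∪
        {{Arc11.pruferO, Arc11.pruferI}, {Arc11.adicO, Arc11.adicI}}) ∧
    ({T : Set Arc11 | IsAsympTri11 T}
      = {T | IsTri11 T} ∪
        {{Arc11.pruferO, Arc11.pruferI}, {Arc11.adicO, Arc11.adicI},
         {Arc11.pruferO, Arc11.adicI}, {Arc11.adicO, Arc11.pruferI}}) ∧
    ∃ T : Set Arc11, IsAsympTri11 T ∧ ¬ IsTri11 T ∧ ¬ IsLimit11 T := by
  refine ⟨Set.ext fun T => isLimit11_iff T, Set.ext fun T => isAsympTri11_iff T,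
    {pruferO, adicI}, isAsympTri11_of_mem_strict (by simp), ?_, ?_⟩
  · rintro ⟨n, h⟩
    simp [Set.pair_eq_pair_iff] at h
  · rw [isLimit11_iff]
    rintro (⟨n, h⟩ | h | h) <;> simp [Set.pair_eq_pair_iff] at h
end
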